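/- arXiv:math/0612182 — 4 statements merged into one kernel-verified Lean document; each statement's English description precedes it below -/
import Mathlib

section
/- The twisted diagonal action of SL(2,ℂ) is transitive on {([z],[w]) ∈ ℙ¹ × ℙ¹ : z₁w₁ − z₂w₂ ≠ 0}: for all nonzero vectors z = (z₁,z₂), w = (w₁,w₂) ∈ ℂ² with z₁w₁ − z₂w₂ ≠ 0 there exist g ∈ SL(2,ℂ) and nonzero scalars λ, μ ∈ ℂ such that g·(1,0) = λ·z and (overline{σ(g)})·(1,0) = μ·w. Hence the SL(2,ℂ)-orbit of the point ([1:0],[1:0]) equals {([z₁:z₂],[w₁:w₂]) ∈ ℙ¹ × ℙ¹ : z₁w₁ − z₂w₂ ≠ 0}. -/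
open Matrix Complex

noncomputable section

abbrev M2 : Type := Matrix (Fin 2) (Fin 2) ℂ

/-- The diagonal matrix `diag(1,-1)`. -/
def I11 : M2 := !![1, 0; 0, -1]

/-- The conjugation `σ(g) = I₁₁ ⬝ ᵗ(ḡ)⁻¹ ⬝ I₁₁`. -/
def sigmaC (g : M2) : M2 := I11 * ((g.map (starRingEnd ℂ))ᵀ)⁻¹ * I11

/-- `overline{σ(g)}`, the matrix acting on the second factor. -/
def tw (g : M2) : M2 := (sigmaC g).map (starRingEnd ℂ)

/-- The predicate `g ∈ SU(1,1)`. -/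
def SU11 (g : M2) : Prop := g.det = 1 ∧ (g.map (starRingEnd ℂ))ᵀ * I11 * g = I11

abbrev P1 : Type := Projectivization ℂ (Fin 2 → ℂ)

lemma fstNe (a b : ℂ) (ha : a ≠ 0) : ![a, b] ≠ 0 := by
  intro h
  exact ha (by simpa using congrFun h 0)

lemma oneNe (b : ℂ) : ![1, b] ≠ 0 := fstNe 1 b one_ne_zero

/-- The open `SL(2,ℂ)`-orbit `{ z₁w₁ - z₂w₂ ≠ 0 }` in `ℙ¹ × ℙ¹`. -/
def Omega : Set (P1 × P1) :=
  {p | ∃ (z w : Fin 2 → ℂ) (hz : z ≠ 0) (hw : w ≠ 0),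
    p = (Projectivization.mk ℂ z hz, Projectivization.mk ℂ w hw) ∧
    z 0 * w 0 - z 1 * w 1 ≠ 0}

/-- The domain `W ⊂ ℙ¹ × ℙ¹`. -/
def W : Set (P1 × P1) :=
  {p | ∃ (z w : Fin 2 → ℂ) (hz : z ≠ 0) (hw : w ≠ 0),
    p = (Projectivization.mk ℂ z hz, Projectivization.mk ℂ w hw) ∧
    ‖z 1‖ < ‖z 0‖ ∧ z 0 * w 0 - z 1 * w 1 ≠ 0}

lemma Matrix.inv_eq_adjugate_of_det_eq_one {n R : Type*} [Fintype n] [DecidableEq n] [CommRing R]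
    {A : Matrix n n R} (h : A.det = 1) : A⁻¹ = A.adjugate := by
  rw [Matrix.inv_def, h, Ring.inverse_one, one_smul]

lemma Matrix.mulVec_one_zero {R : Type*} [NonAssocSemiring R] (g : Matrix (Fin 2) (Fin 2) R) :
    g *ᵥ ![1, 0] = ![g 0 0, g 1 0] := by
  ext i; fin_cases i <;> simp [mulVec, dotProduct]

/-- The two complex conjugations cancel, and conjugating by `I₁₁` removes the signs of the
adjugate `(gᵀ)⁻¹`. -/
lemma tw_eq_of_det_eq_one {g : M2} (hg : g.det = 1) :
    tw g = !![g 1 1, g 1 0; g 0 1, g 0 0] := by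
  have hdet : ((g.map (starRingEnd ℂ))ᵀ).det = 1 := by
    rw [det_transpose, show g.map _ = (starRingEnd ℂ).mapMatrix g from rfl, ← RingHom.map_det,
      hg, map_one]
  rw [tw, sigmaC, inv_eq_adjugate_of_det_eq_one hdet, adjugate_fin_two]
  ext i j; fin_cases i <;> fin_cases j <;> simp [I11]

lemma mulVec_pairing_tw_mulVec_eq_one {g : M2} (hg : g.det = 1) :
    (g *ᵥ ![1, 0]) 0 * (tw g *ᵥ ![1, 0]) 0 - (g *ᵥ ![1, 0]) 1 * (tw g *ᵥ ![1, 0]) 1 = 1 := by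
  rw [tw_eq_of_det_eq_one hg, mulVec_one_zero, mulVec_one_zero]
  simpa [det_fin_two, mul_comm] using hg

lemma exists_det_eq_one_mulVec_eq_tw_mulVec_eq {z w : Fin 2 → ℂ}
    (hzw : z 0 * w 0 - z 1 * w 1 ≠ 0) :
    ∃ g : M2, g.det = 1 ∧ g *ᵥ ![1, 0] = z ∧
      tw g *ᵥ ![1, 0] = (z 0 * w 0 - z 1 * w 1)⁻¹ • w := by
  set t := (z 0 * w 0 - z 1 * w 1)⁻¹
  have hdet : (!![z 0, w 1 * t; z 1, w 0 * t] : M2).det = 1 := by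
    rw [det_fin_two_of]
    linear_combination mul_inv_cancel₀ hzw
  refine ⟨!![z 0, w 1 * t; z 1, w 0 * t], hdet, ?_, ?_⟩
  · rw [mulVec_one_zero]
    ext i; fin_cases i <;> simp
  · rw [tw_eq_of_det_eq_one hdet, mulVec_one_zero]
    ext i; fin_cases i <;> simp [mul_comm _ t]

lemma Projectivization.mk_smul_eq {K V : Type*} [Field K] [AddCommGroup V] [Module K V]
    {a : K} {v : V} (hav : a • v ≠ 0) (hv : v ≠ 0) : mk K (a • v) hav = mk K v hv :=
  (mk_eq_mk_iff' K _ _ hav hv).2 ⟨a, rfl⟩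

/-- The twisted diagonal action of `SL(2,ℂ)` is transitive on
`{([z],[w]) : z₁w₁ - z₂w₂ ≠ 0}`; hence the orbit of `([1:0],[1:0])` is that set. -/
theorem twisted_action_transitive :
    (∀ z w : Fin 2 → ℂ, z ≠ 0 → w ≠ 0 → z 0 * w 0 - z 1 * w 1 ≠ 0 →
      ∃ g : M2, g.det = 1 ∧ ∃ lam mu : ℂ, lam ≠ 0 ∧ mu ≠ 0 ∧
        g.mulVec ![1, 0] = lam • z ∧ (tw g).mulVec ![1, 0] = mu • w) ∧
    {p : P1 × P1 | ∃ g : M2, g.det = 1 ∧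
        ∃ (hz : g.mulVec ![1, 0] ≠ 0) (hw : (tw g).mulVec ![1, 0] ≠ 0),
          p = (Projectivization.mk ℂ (g.mulVec ![1, 0]) hz,
               Projectivization.mk ℂ ((tw g).mulVec ![1, 0]) hw)} = Omega := by
  refine ⟨fun z w _ _ hzw => ?_, Set.ext fun p => ⟨?_, ?_⟩⟩
  · obtain ⟨g, hg, hgz, hgw⟩ := exists_det_eq_one_mulVec_eq_tw_mulVec_eq hzw
    exact ⟨g, hg, 1, _, one_ne_zero, inv_ne_zero hzw, by rw [hgz, one_smul], hgw⟩
  · rintro ⟨g, hg, hz, hw, rfl⟩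
    exact ⟨_, _, hz, hw, rfl, by rw [mulVec_pairing_tw_mulVec_eq_one hg]; exact one_ne_zero⟩
  · rintro ⟨z, w, hz, hw, rfl, hzw⟩
    obtain ⟨g, hg, hgz, hgw⟩ := exists_det_eq_one_mulVec_eq_tw_mulVec_eq hzw
    subst hgz
    refine ⟨g, hg, hz, hgw ▸ smul_ne_zero (inv_ne_zero hzw) hw, ?_⟩
    simp only [hgw, Projectivization.mk_smul_eq _ hw]

end
end

section
/- The SU(1,1)-orbit of the point w₁ = ([1:0],[1:i]) ∈ ℙ¹ × ℙ¹ under the twisted diagonal action is the Levi-flat set {([1:ζ],[1:ω]) : ζ, ω ∈ ℂ, |ζ| < 1, |ω| = 1}: for every g ∈ SU(1,1) there exist ζ with |ζ| < 1 and ω with |ω| = 1 such that g·w₁ = ([1:ζ],[1:ω]), and conversely every such pair (ζ, ω) arises from some g ∈ SU(1,1). -/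
open Matrix Complex

noncomputable section

/-!
`SU(1,1)` preserves the Hermitian form `|v₀|² - |v₁|²`, and so does the entrywise conjugate of
any of its elements. The vector `(1,0)` is positive and `(1,i)` is null for this form, so their
images have nonzero first coordinate and are `[1:ζ]` with `|ζ| < 1`, resp. `[1:ω]` with `|ω| = 1`.
Conversely `g = [[a, ζ̄ā], [ζa, ā]]` with `|a|²(1 - |ζ|²) = 1` lies in `SU(1,1)` and sends `[1:0]`
to `[1:ζ]`; asking that `ḡ` send `[1:i]` to `[1:ω]` fixes the phase of `a`, which is found by
extracting a square root of a unimodular number.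
-/

open ComplexConjugate

def hermForm (v : Fin 2 → ℂ) : ℝ := normSq (v 0) - normSq (v 1)

lemma ofReal_hermForm (v : Fin 2 → ℂ) :
    (hermForm v : ℂ) = conj (v 0) * v 0 - conj (v 1) * v 1 := by
  simp [hermForm, Complex.normSq_eq_conj_mul_self]

def IsU11 (g : M2) : Prop := (g.map conj)ᵀ * I11 * g = I11

lemma I11_mul_I11 : I11 * I11 = 1 := by
  ext i j
  fin_cases i <;> fin_cases j <;> simp [I11]

namespace IsU11

variable {g : M2}

lemma hermForm_mulVec (hg : IsU11 g) (v : Fin 2 → ℂ) : hermForm (g *ᵥ v) = hermForm v := by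
  have entry (i j : Fin 2) := congrFun (congrFun hg i) j
  have h00 := entry 0 0; have h01 := entry 0 1; have h10 := entry 1 0; have h11 := entry 1 1
  simp only [I11, Matrix.mul_apply, transpose_apply, map_apply, of_apply, cons_val', cons_val_fin_one,
    Fin.sum_univ_two, cons_val_zero, cons_val_one, mul_one, mul_zero, add_zero, mul_neg, zero_add,
    neg_mul] at h00 h01 h10 h11
  apply Complex.ofReal_injective
  simp only [ofReal_hermForm, Matrix.mulVec, dotProduct, Fin.sum_univ_two, map_add, map_mul]
  linear_combination conj (v 0) * v 0 * h00 + conj (v 0) * v 1 * h01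
    + conj (v 1) * v 0 * h10 + conj (v 1) * v 1 * h11

lemma map_conj (hg : IsU11 g) : IsU11 (g.map conj) := by
  unfold IsU11 at hg ⊢
  have hI : I11.map conj = I11 := by
    ext i j; fin_cases i <;> fin_cases j <;> simp [I11]
  simpa [Matrix.map_mul, Matrix.transpose_map, hI] using congrArg (Matrix.map · conj) hg

lemma tw_eq (hg : IsU11 g) : tw g = g.map conj := by
  have hinv : ((g.map conj)ᵀ)⁻¹ = I11 * g * I11 :=
    Matrix.inv_eq_right_inv <| by
      rw [← Matrix.mul_assoc, ← Matrix.mul_assoc, hg, I11_mul_I11]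
  rw [tw, sigmaC, hinv, ← Matrix.mul_assoc, ← Matrix.mul_assoc, I11_mul_I11, Matrix.one_mul,
    Matrix.mul_assoc, I11_mul_I11, Matrix.mul_one]

end IsU11

lemma SU11.map_conj {g : M2} (hg : SU11 g) : SU11 (g.map conj) := by
  refine ⟨?_, IsU11.map_conj hg.2⟩
  rw [← RingHom.mapMatrix_apply, ← RingHom.map_det, hg.1, map_one]

lemma SU11.mulVec_ne_zero {g : M2} (hg : SU11 g) {v : Fin 2 → ℂ} (hv : v ≠ 0) : g *ᵥ v ≠ 0 :=
  fun h => one_ne_zero (hg.1 ▸ Matrix.exists_mulVec_eq_zero_iff.1 ⟨v, hv, h⟩)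

lemma mk_eq_mk_one {x : Fin 2 → ℂ} (hx : x ≠ 0) {ζ : ℂ} (h : x 1 = ζ * x 0) :
    Projectivization.mk ℂ x hx = Projectivization.mk ℂ ![1, ζ] (oneNe ζ) := by
  rw [Projectivization.mk_eq_mk_iff]
  refine ⟨Units.mk0 (x 0) fun h0 => hx ?_, ?_⟩
  · ext i; fin_cases i <;> simp [h, h0]
  · ext i; fin_cases i <;> simp [h, mul_comm]

lemma apply_zero_ne_zero_of_hermForm_nonneg {x : Fin 2 → ℂ} (hx : x ≠ 0) (h : 0 ≤ hermForm x) :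
    x 0 ≠ 0 := by
  intro h0
  refine hx (funext fun i => ?_)
  fin_cases i
  · exact h0
  · exact Complex.normSq_eq_zero.1 (le_antisymm (by simpa [hermForm, h0] using h) (normSq_nonneg _))

lemma exists_mk_eq_of_hermForm_pos {x : Fin 2 → ℂ} (hx : x ≠ 0) (h : 0 < hermForm x) :
    ∃ ζ : ℂ, ‖ζ‖ < 1 ∧ Projectivization.mk ℂ x hx = Projectivization.mk ℂ ![1, ζ] (oneNe ζ) := by
  have h0 := apply_zero_ne_zero_of_hermForm_nonneg hx h.le
  refine ⟨x 1 / x 0, ?_, mk_eq_mk_one hx (div_mul_cancel₀ _ h0).symm⟩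
  rw [norm_div, div_lt_one (norm_pos_iff.2 h0), ← sq_lt_sq₀ (norm_nonneg _) (norm_nonneg _),
    Complex.sq_norm, Complex.sq_norm]
  simpa [hermForm] using h

lemma exists_mk_eq_of_hermForm_eq_zero {x : Fin 2 → ℂ} (hx : x ≠ 0) (h : hermForm x = 0) :
    ∃ ω : ℂ, ‖ω‖ = 1 ∧ Projectivization.mk ℂ x hx = Projectivization.mk ℂ ![1, ω] (oneNe ω) := by
  have h0 := apply_zero_ne_zero_of_hermForm_nonneg hx h.ge
  refine ⟨x 1 / x 0, ?_, mk_eq_mk_one hx (div_mul_cancel₀ _ h0).symm⟩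
  rw [norm_div, div_eq_one_iff_eq (norm_ne_zero_iff.2 h0),
    ← sq_eq_sq₀ (norm_nonneg _) (norm_nonneg _), Complex.sq_norm, Complex.sq_norm]
  linarith [show hermForm x = normSq (x 0) - normSq (x 1) from rfl]

def su11Matrix (a b : ℂ) : M2 := !![a, b; conj b, conj a]

lemma SU11_su11Matrix {a b : ℂ} (h : normSq a - normSq b = 1) : SU11 (su11Matrix a b) := by
  have h' : conj a * a - conj b * b = 1 := by
    simpa [Complex.normSq_eq_conj_mul_self] using congrArg ((↑) : ℝ → ℂ) h
  refine ⟨by rw [su11Matrix, Matrix.det_fin_two_of]; linear_combination h', ?_⟩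
  ext i j
  fin_cases i <;> fin_cases j <;> simp [su11Matrix, I11, Matrix.mul_apply, Fin.sum_univ_two]
  all_goals first | ring1 | linear_combination h' | linear_combination -h'

lemma exists_norm_eq_one_mul_eq_conj_mul {x y : ℂ} (hx : x ≠ 0) (hxy : ‖x‖ = ‖y‖) :
    ∃ u : ℂ, ‖u‖ = 1 ∧ u * x = conj u * y := by
  obtain ⟨u, hu⟩ := IsAlgClosed.exists_pow_nat_eq (y / x) two_pos
  have hu1 : ‖u‖ = 1 := by
    have : ‖u‖ ^ 2 = 1 := by
      rw [← norm_pow, hu, norm_div, ← hxy, div_self (norm_ne_zero_iff.2 hx)]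
    exact (pow_eq_one_iff_of_nonneg (norm_nonneg u) two_ne_zero).1 this
  have huu : conj u * u = 1 := by
    rw [← Complex.normSq_eq_conj_mul_self, Complex.normSq_eq_norm_sq, hu1]; norm_num
  refine ⟨u, hu1, ?_⟩
  calc u * x = conj u * (u ^ 2 * x) := by linear_combination (-(u * x)) * huu
    _ = conj u * y := by rw [hu, div_mul_cancel₀ _ hx]

-- The conditions on the entry `a` of `su11Matrix a (conj (ζ * a))` making it send `w₁` to `([1:ζ],[1:ω])`.
lemma exists_su11Matrix_entry {ζ ω : ℂ} (hζ : ‖ζ‖ < 1) (hω : ‖ω‖ = 1) :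
    ∃ a : ℂ, normSq a * (1 - normSq ζ) = 1 ∧ a * (I * (1 - ω * ζ)) = conj a * (ω - conj ζ) := by
  have hωζ : ‖ω * ζ‖ < 1 := by rwa [norm_mul, hω, one_mul]
  have hne : I * (1 - ω * ζ) ≠ 0 :=
    mul_ne_zero I_ne_zero (sub_ne_zero.2 fun h => hωζ.ne (by rw [← h, norm_one]))
  have hnorm : ‖I * (1 - ω * ζ)‖ = ‖ω - conj ζ‖ := by
    have hωω : ω * conj ω = 1 := by
      rw [Complex.mul_conj, Complex.normSq_eq_norm_sq, hω]; norm_num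
    have : ω - conj ζ = ω * conj (1 - ω * ζ) := by
      simp only [map_sub, map_one, map_mul]; linear_combination conj ζ * hωω
    rw [this, norm_mul, norm_mul, hω, Complex.norm_conj, norm_I]
  obtain ⟨u, hu1, hu⟩ := exists_norm_eq_one_mul_eq_conj_mul hne hnorm
  have hpos : 0 < 1 - normSq ζ := by
    rw [Complex.normSq_eq_norm_sq]; nlinarith [norm_nonneg ζ]
  set r := √(1 - normSq ζ)
  refine ⟨(r⁻¹ : ℝ) * u, ?_, ?_⟩
  · rw [normSq_mul, normSq_ofReal, Complex.normSq_eq_norm_sq u, hu1, one_pow, mul_one,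
      ← mul_inv, Real.mul_self_sqrt hpos.le, inv_mul_cancel₀ hpos.ne']
  · rw [map_mul, conj_ofReal, mul_assoc, hu, mul_assoc]

lemma exists_SU11_of_norm_lt_one_of_norm_eq_one {ζ ω : ℂ} (hζ : ‖ζ‖ < 1) (hω : ‖ω‖ = 1) :
    ∃ g : M2, SU11 g ∧ (g *ᵥ ![1, 0]) 1 = ζ * (g *ᵥ ![1, 0]) 0 ∧
      (tw g *ᵥ ![1, I]) 1 = ω * (tw g *ᵥ ![1, I]) 0 := by
  obtain ⟨a, ha, hphase⟩ := exists_su11Matrix_entry hζ hω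
  have hg : SU11 (su11Matrix a (conj (ζ * a))) :=
    SU11_su11Matrix (by rw [normSq_conj, normSq_mul]; linear_combination ha)
  refine ⟨_, hg, by simp [su11Matrix], ?_⟩
  rw [IsU11.tw_eq hg.2]
  simp only [su11Matrix, map_mul, RingHomCompTriple.comp_apply, RingHom.id_apply, mulVec_fin_two,
    map_apply, of_apply, cons_val', cons_val_zero, cons_val_fin_one, mul_one, cons_val_one]
  linear_combination hphase

/-- The `SU(1,1)`-orbit of `w₁ = ([1:0],[1:i])` is the Levi-flat set
`{([1:ζ],[1:ω]) : |ζ| < 1, |ω| = 1}`. -/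
theorem orbit_of_w1 :
    (∀ g : M2, SU11 g →
      ∀ (hz : g.mulVec ![1, 0] ≠ 0) (hw : (tw g).mulVec ![1, Complex.I] ≠ 0),
        ∃ ζ ω : ℂ, ‖ζ‖ < 1 ∧ ‖ω‖ = 1 ∧
          Projectivization.mk ℂ (g.mulVec ![1, 0]) hz
            = Projectivization.mk ℂ ![1, ζ] (oneNe ζ) ∧
          Projectivization.mk ℂ ((tw g).mulVec ![1, Complex.I]) hw
            = Projectivization.mk ℂ ![1, ω] (oneNe ω)) ∧
    (∀ ζ ω : ℂ, ‖ζ‖ < 1 → ‖ω‖ = 1 →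
      ∃ g : M2, SU11 g ∧
        ∃ (hz : g.mulVec ![1, 0] ≠ 0) (hw : (tw g).mulVec ![1, Complex.I] ≠ 0),
          Projectivization.mk ℂ (g.mulVec ![1, 0]) hz
            = Projectivization.mk ℂ ![1, ζ] (oneNe ζ) ∧
          Projectivization.mk ℂ ((tw g).mulVec ![1, Complex.I]) hw
            = Projectivization.mk ℂ ![1, ω] (oneNe ω)) := by
  constructor
  · intro g hg hz hw
    have hpos : 0 < hermForm (g *ᵥ ![1, 0]) := by
      rw [IsU11.hermForm_mulVec hg.2]; simp [hermForm]
    have hnull : hermForm (tw g *ᵥ ![1, I]) = 0 := by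
      rw [IsU11.tw_eq hg.2, IsU11.hermForm_mulVec (IsU11.map_conj hg.2)]; simp [hermForm]
    obtain ⟨ζ, hζ, hzζ⟩ := exists_mk_eq_of_hermForm_pos hz hpos
    obtain ⟨ω, hω, hwω⟩ := exists_mk_eq_of_hermForm_eq_zero hw hnull
    exact ⟨ζ, ω, hζ, hω, hzζ, hwω⟩
  · intro ζ ω hζ hω
    obtain ⟨g, hg, hgζ, hgω⟩ := exists_SU11_of_norm_lt_one_of_norm_eq_one hζ hω
    have hz := hg.mulVec_ne_zero (oneNe 0)
    have hw : tw g *ᵥ ![1, I] ≠ 0 := IsU11.tw_eq hg.2 ▸ hg.map_conj.mulVec_ne_zero (oneNe I)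
    exact ⟨g, hg, hz, hw, mk_eq_mk_one hz hgζ, mk_eq_mk_one hw hgω⟩

end
end

section
/- The map Φ : Δ × ℂ → ℙ¹ × ℙ¹ defined by Φ(u,v) = ([1:u], [1 + uv : v]) is well defined (the vector (1+uv, v) is never zero) and is a bijection from Δ × ℂ onto W = {([z₁:z₂],[w₁:w₂]) ∈ ℙ¹ × ℙ¹ : |z₂| < |z₁| and z₁w₁ − z₂w₂ ≠ 0}. In particular W is biholomorphic to Δ × ℂ, hence not hyperbolic. -/
open Matrix Complex

noncomputable section

/-- The vector `(1 + uv, v)` is never zero, so `Φ` is well defined. -/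
lemma phiNe (u v : ℂ) : ![1 + u * v, v] ≠ 0 := by
  intro h
  have h0 : 1 + u * v = 0 := by simpa using congrFun h 0
  have h1 : v = 0 := by simpa using congrFun h 1
  rw [h1, mul_zero, add_zero] at h0
  exact one_ne_zero h0

/-- The map `Φ(u,v) = ([1:u], [1+uv : v])`. -/
def Phi (u v : ℂ) : P1 × P1 :=
  (Projectivization.mk ℂ ![1, u] (oneNe u),
   Projectivization.mk ℂ ![1 + u * v, v] (phiNe u v))

/-!
Two nonzero vectors of `K²` span the same line iff their `2 × 2` determinant vanishes. Hence
`Φ(u,v) = ([z₁:z₂],[w₁:w₂])` amounts to the conditions `z₂ = u z₁` and `(1 + uv) w₂ = v w₁`,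
which for `z₁ ≠ 0` and `z₁w₁ − z₂w₂ ≠ 0` have exactly one solution:
`u = z₂/z₁`, `v = z₁w₂/(z₁w₁ − z₂w₂)`.
-/

theorem Projectivization.mk_eq_mk_iff_mul_eq_mul {K : Type*} [Field K] {v w : Fin 2 → K}
    (hv : v ≠ 0) (hw : w ≠ 0) :
    Projectivization.mk K v hv = Projectivization.mk K w hw ↔ v 0 * w 1 = v 1 * w 0 := by
  rw [Projectivization.mk_eq_mk_iff']
  constructor
  · rintro ⟨a, rfl⟩
    simp only [Pi.smul_apply, smul_eq_mul]
    ring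
  · intro h
    by_cases hw0 : w 0 = 0
    · have hw1 : w 1 ≠ 0 := fun hw1 => hw (by ext i; fin_cases i <;> assumption)
      have hv0 : v 0 = 0 := by simpa [hw0, hw1] using h
      refine ⟨v 1 / w 1, funext fun i => ?_⟩
      fin_cases i <;> simp [hw0, hv0, hw1]
    · refine ⟨v 0 / w 0, funext fun i => ?_⟩
      fin_cases i
      · simp [hw0]
      · simp only [Fin.mk_one, Pi.smul_apply, smul_eq_mul]
        field_simp
        linear_combination h

theorem Phi_eq_mk_iff (u v : ℂ) {z w : Fin 2 → ℂ} (hz : z ≠ 0) (hw : w ≠ 0) :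
    Phi u v = (Projectivization.mk ℂ z hz, Projectivization.mk ℂ w hw) ↔
      z 1 = u * z 0 ∧ (1 + u * v) * w 1 = v * w 0 := by
  simp [Phi, Projectivization.mk_eq_mk_iff_mul_eq_mul]

theorem Phi_injective : Function.Injective (fun p : ℂ × ℂ => Phi p.1 p.2) := by
  rintro ⟨u, v⟩ ⟨u', v'⟩ h
  obtain ⟨hu : u' = u * 1, hv : (1 + u * v) * v' = v * (1 + u' * v')⟩ :=
    (Phi_eq_mk_iff u v (oneNe u') (phiNe u' v')).1 h
  rw [mul_one] at hu
  subst hu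
  simp only [Prod.mk.injEq, true_and]
  linear_combination -hv

theorem Phi_mapsTo : Set.MapsTo (fun p : ℂ × ℂ => Phi p.1 p.2) {p : ℂ × ℂ | ‖p.1‖ < 1} W := by
  rintro ⟨u, v⟩ hu
  refine ⟨![1, u], ![1 + u * v, v], oneNe u, phiNe u v, rfl, by simpa using hu, ?_⟩
  simp

theorem Phi_surjOn : Set.SurjOn (fun p : ℂ × ℂ => Phi p.1 p.2) {p : ℂ × ℂ | ‖p.1‖ < 1} W := by
  rintro _ ⟨z, w, hz, hw, rfl, hzlt, hD⟩
  have hz0 : z 0 ≠ 0 := norm_pos_iff.1 ((norm_nonneg _).trans_lt hzlt)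
  refine ⟨(z 1 / z 0, z 0 * w 1 / (z 0 * w 0 - z 1 * w 1)), ?_, ?_⟩
  · simpa [norm_div, div_lt_one (norm_pos_iff.2 hz0)] using hzlt
  · refine (Phi_eq_mk_iff _ _ hz hw).2 ⟨by field_simp, ?_⟩
    field_simp
    ring

/-- `Φ(u,v) = ([1:u],[1+uv:v])` is a bijection from `Δ × ℂ` onto `W`. -/
theorem Phi_bijOn :
    Set.BijOn (fun p : ℂ × ℂ => Phi p.1 p.2) {p : ℂ × ℂ | ‖p.1‖ < 1} W :=
  ⟨Phi_mapsTo, Phi_injective.injOn, Phi_surjOn⟩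

end
end

section
/- The point z₂ = ([1:i],[1:i]) lies in the open SL(2,ℂ)-orbit but not in W: writing z₂ with homogeneous coordinates z = (1,i), w = (1,i), one has z₁w₁ − z₂w₂ = 2 ≠ 0, while the condition |z₂| < |z₁| fails (|i| = |1|); moreover z₂ lies in the closure of W in ℙ¹ × ℙ¹, since z₂ is the limit as s → 0⁺ of the points ℓ₂(s) = ([eˢ : i e⁻ˢ], [e⁻ˢ : i eˢ]), all of which belong to W. -/
open Matrix Complex

noncomputable section

/-- The quotient topology on the projective line. -/
instance : TopologicalSpace P1 :=
  inferInstanceAs (TopologicalSpace (Quotient (projectivizationSetoid ℂ (Fin 2 → ℂ))))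

/-- The point `z₂ = ([1:i],[1:i]) ∈ ℙ¹ × ℙ¹`. -/
def z2pt : P1 × P1 :=
  (Projectivization.mk ℂ ![1, Complex.I] (oneNe Complex.I),
   Projectivization.mk ℂ ![1, Complex.I] (oneNe Complex.I))

/-- The point `ℓ₂(s) = ([eˢ : i e⁻ˢ], [e⁻ˢ : i eˢ]) ∈ ℙ¹ × ℙ¹`. -/
def l2pt (s : ℝ) : P1 × P1 :=
  (Projectivization.mk ℂ ![(Real.exp s : ℂ), Complex.I * (Real.exp (-s) : ℂ)]
    (fstNe _ _ (by exact_mod_cast Real.exp_ne_zero s)),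
   Projectivization.mk ℂ ![(Real.exp (-s) : ℂ), Complex.I * (Real.exp s : ℂ)]
    (fstNe _ _ (by exact_mod_cast Real.exp_ne_zero (-s))))

/-! The condition `‖z 1‖ < ‖z 0‖` is invariant under rescaling, so it fails at every
representative of `[1 : i]`. Along `ℓ₂(s)` the ratio `‖z 1‖ / ‖z 0‖` is `e^{-2s} < 1` and
`z₁w₁ − z₂w₂ = 2`, and `ℓ₂` is continuous with `ℓ₂(0) = z₂`. -/

lemma Projectivization.norm_lt_norm_of_mk_eq {K ι : Type*} [NormedDivisionRing K]
    {v w : ι → K} {hv : v ≠ 0} {hw : w ≠ 0} (h : Projectivization.mk K v hv = .mk K w hw)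
    {i j : ι} (hlt : ‖v i‖ < ‖v j‖) : ‖w i‖ < ‖w j‖ := by
  obtain ⟨a, rfl⟩ := (Projectivization.mk_eq_mk_iff K v w hv hw).1 h
  simp only [Pi.smul_apply, Units.smul_def, smul_eq_mul, norm_mul] at hlt
  exact lt_of_mul_lt_mul_left hlt (norm_nonneg _)

lemma continuous_mk_P1 {X : Type*} [TopologicalSpace X] {f : X → Fin 2 → ℂ}
    (hf : Continuous f) (hf0 : ∀ x, f x ≠ 0) :
    Continuous fun x => Projectivization.mk ℂ (f x) (hf0 x) :=
  continuous_quotient_mk'.comp (hf.subtype_mk hf0)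

lemma z2pt_not_mem_W : z2pt ∉ W := by
  rintro ⟨z, w, hz, hw, hp, hlt, -⟩
  have := Projectivization.norm_lt_norm_of_mk_eq (congrArg Prod.fst hp).symm hlt
  simp at this

lemma l2pt_mem_W {s : ℝ} (hs : 0 < s) : l2pt s ∈ W := by
  refine ⟨_, _, _, _, rfl, ?_, ?_⟩
  · simp only [cons_val_zero, cons_val_one, norm_mul, norm_I, one_mul, norm_real,
      Real.norm_of_nonneg (Real.exp_pos _).le]
    exact Real.exp_lt_exp.2 (neg_lt_self hs)
  · have hexp : (Real.exp s : ℂ) * Real.exp (-s) = 1 := by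
      rw [← ofReal_mul, ← Real.exp_add, add_neg_cancel, Real.exp_zero, ofReal_one]
    have hcross : (Real.exp s : ℂ) * Real.exp (-s) - I * Real.exp (-s) * (I * Real.exp s) = 2 := by
      linear_combination (1 - I * I) * hexp - I_mul_I
    simp only [cons_val_zero, cons_val_one, hcross]
    exact two_ne_zero

lemma continuous_l2pt : Continuous l2pt :=
  (continuous_mk_P1 (by fun_prop) _).prodMk (continuous_mk_P1 (by fun_prop) _)

lemma l2pt_zero : l2pt 0 = z2pt := by
  simp [l2pt, z2pt]

/-- The point `z₂ = ([1:i],[1:i])` lies in the open `SL(2,ℂ)`-orbit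
(`z₁w₁ - z₂w₂ = 2 ≠ 0`) but not in `W` (`|i| < |1|` fails); nevertheless it lies in the
closure of `W`: it is the limit as `s → 0⁺` of the points `ℓ₂(s)`, all of which lie in `W`. -/
theorem z2_in_closure_W_not_in_W :
    ((1 : ℂ) * 1 - Complex.I * Complex.I = 2 ∧ (2 : ℂ) ≠ 0) ∧
    ¬ ‖Complex.I‖ < ‖(1 : ℂ)‖ ∧
    z2pt ∉ W ∧
    (∀ s : ℝ, 0 < s → l2pt s ∈ W) ∧
    Filter.Tendsto l2pt (nhdsWithin 0 (Set.Ioi 0)) (nhds z2pt) ∧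
    z2pt ∈ closure W := by
  have htendsto : Filter.Tendsto l2pt (nhdsWithin 0 (Set.Ioi 0)) (nhds z2pt) :=
    l2pt_zero ▸ (continuous_l2pt.tendsto 0).mono_left nhdsWithin_le_nhds
  refine ⟨⟨by rw [I_mul_I]; norm_num, two_ne_zero⟩, by simp, z2pt_not_mem_W,
    fun _ => l2pt_mem_W, htendsto, ?_⟩
  exact mem_closure_of_tendsto htendsto (eventually_nhdsWithin_of_forall fun _ => l2pt_mem_W)

end
end
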